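/- arXiv:1609.07065 — 5 statements merged into one kernel-verified Lean document; each statement's English description precedes it below -/
import Mathlib

section
/- Let S ⊆ R be SRSs over Σ_A and let shift_rel(S,R) = (S', shift(R)) where S' = {L ℓ → D r | (ℓ → r) ∈ S}. Then S' is string terminating relative to shift(R) (i.e., →_{S'} is terminating relative to →_{shift(R)}) if and only if S is cycle terminating relative to R (i.e., ∘→_S is terminating relative to ∘→_R). -/
/-
Completeness: a cycle step `[l w] ∘→ [r w]` is simulated in `shift(R)` by a round
`B z E →* W Mᴺ V z E →* W V t p E →* R xᶜ L l y E → R xᶜ D r y E →* B x r y E`, where fewer than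
`|l| ≤ N + 1` letters `p` are rotated to the back (one `M` each) so that `l` becomes a factor of
`t p = x l y`; its only `shiftH` step is an `S'`-step exactly when the simulated step is an
`S`-step.

Soundness: the tokens `B, W, R, E` cut a string into zones, and every rule of `shift(R)` rewrites
inside a single zone. Read a zone as the cyclic word of its `Σ_A`/`Σ_C` letters followed by its
reversed `Σ_B` letters. Every step keeps that word up to rotation, or performs a cycle step of `R`
on it (the `shiftH` steps; `S'`-steps give `S`-steps), or strictly decreases the number of `M`s
preceded by a letter, which never increases. Some zone is hit by infinitely many `S'`-steps; once
its count of such `M`s has stabilised it carries an infinite `∘→_R`-sequence, with infinitely many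
`∘→_S`-steps once the rotations are absorbed into the neighbouring cycle steps.
-/

namespace CycleRewriting

/-- A binary relation is terminating if there is no infinite reduction sequence. -/
def Terminating {beta : Type*} (r : beta → beta → Prop) : Prop :=
  ¬ ∃ f : ℕ → beta, ∀ n : ℕ, r (f n) (f (n + 1))

/-- `r₁` is terminating relative to `r₂` iff every infinite `r₂`-sequence contains only
finitely many `r₁`-steps. -/
def RelTerminating {beta : Type*} (r₁ r₂ : beta → beta → Prop) : Prop :=
  ¬ ∃ f : ℕ → beta, (∀ n : ℕ, r₂ (f n) (f (n + 1))) ∧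
      {n : ℕ | r₁ (f n) (f (n + 1))}.Infinite

/-- The string rewrite relation of an SRS `R`. -/
def Step {α : Type*} (R : Set (List α × List α)) (x y : List α) : Prop :=
  ∃ u v l r, (l, r) ∈ R ∧ x = u ++ l ++ v ∧ y = u ++ r ++ v

/-- The prefix rewrite relation of an SRS `R`. -/
def PrefixStep {α : Type*} (R : Set (List α × List α)) (x y : List α) : Prop :=
  ∃ l r w, (l, r) ∈ R ∧ x = l ++ w ∧ y = r ++ w

/-- The rotation equivalence `u ~ v` iff `u = w₁w₂` and `v = w₂w₁`. -/
def Sim {α : Type*} (u v : List α) : Prop :=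
  ∃ w₁ w₂, u = w₁ ++ w₂ ∧ v = w₂ ++ w₁

/-- The cycle rewrite relation of an SRS `R` (on representatives of `Sim`-classes):
`[u] ∘→_R [v]` iff there are a rule `(l, r) ∈ R` and `w` with `l ++ w ∈ [u]` and
`r ++ w ∈ [v]`. -/
def CycleStep {α : Type*} (R : Set (List α × List α)) (x y : List α) : Prop :=
  ∃ l r w, (l, r) ∈ R ∧ Sim (l ++ w) x ∧ Sim (r ++ w) y

/-- The shift relation `↷`: move the first symbol of a string to its end. -/
def Rot {α : Type*} (u v : List α) : Prop :=
  ∃ a w, u = a :: w ∧ v = w ++ [a]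

/-- `k`-fold composition of a relation. -/
def RelPow {beta : Type*} (r : beta → beta → Prop) : ℕ → beta → beta → Prop
  | 0 => Eq
  | n + 1 => Relation.Comp r (RelPow r n)

/-- `lenSRS R` is the maximal length of a left-hand side of a rule of `R`. -/
noncomputable def lenSRS {α : Type*} (R : Set (List α × List α)) : ℕ :=
  sSup ((fun p : List α × List α => p.1.length) '' R)

/-- The alphabet of `shift R`: the original alphabet `Σ_A`, two fresh copies `Σ_B`,
`Σ_C`, and the fresh symbols `B`, `E`, `W`, `V`, `M`, `L`, `R`, `D`. -/
inductive ShiftSym (α : Type*) where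
  | ca : α → ShiftSym α          -- Σ_A
  | cb : α → ShiftSym α          -- Σ_B
  | cc : α → ShiftSym α          -- Σ_C
  | symB : ShiftSym α
  | symE : ShiftSym α
  | symW : ShiftSym α
  | symV : ShiftSym α
  | symM : ShiftSym α
  | symL : ShiftSym α
  | symR : ShiftSym α
  | symD : ShiftSym α

open ShiftSym in
/-- The transformation `shift`, with `N = max (0, lenSRS R - 1)`. -/
noncomputable def shiftSRS {α : Type*} (R : Set (List α × List α)) :
    Set (List (ShiftSym α) × List (ShiftSym α)) :=
  { p | p = ([symB], symW :: List.replicate (lenSRS R - 1) symM ++ [symV]) ∨  -- shiftA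
        p = ([symM], []) ∨                                                    -- shiftB
        (∃ a : α, p = ([symM, symV, ca a], [symV, cb a])) ∨                   -- shiftC
        (∃ a b : α, p = ([cb b, ca a], [ca a, cb b])) ∨                       -- shiftD
        (∃ b : α, p = ([cb b, symE], [ca b, symE])) ∨                         -- shiftE
        p = ([symW, symV], [symR, symL]) ∨                                    -- shiftF
        (∃ a : α, p = ([symL, ca a], [cc a, symL])) ∨                         -- shiftG
        (∃ l r, (l, r) ∈ R ∧ p = (symL :: l.map ca, symD :: r.map ca)) ∨      -- shiftH
        (∃ c : α, p = ([cc c, symD], [symD, ca c])) ∨                         -- shiftI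
        p = ([symR, symD], [symB]) }                                          -- shiftJ

section RelTerminating

variable {β γ : Type*} {r₁ r₂ : β → β → Prop}

theorem RelTerminating.mono {r₁' r₂' : β → β → Prop} (h : RelTerminating r₁ r₂)
    (h₁ : ∀ x y, r₁' x y → r₁ x y) (h₂ : ∀ x y, r₂' x y → r₂ x y) :
    RelTerminating r₁' r₂' := by
  rintro ⟨f, hf, hinf⟩
  exact h ⟨f, fun n => h₂ _ _ (hf n), hinf.mono fun n => h₁ _ _⟩

theorem RelTerminating.comap (f : γ → β) (h : RelTerminating r₁ r₂) :
    RelTerminating (fun x y => r₁ (f x) (f y)) (fun x y => r₂ (f x) (f y)) := by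
  rintro ⟨g, hg, hinf⟩
  exact h ⟨f ∘ g, hg, hinf⟩

theorem reflTransGen_of_forall_lt {e : β → β → Prop} {g : ℕ → β} {a b : ℕ} (hab : a ≤ b)
    (h : ∀ m, a ≤ m → m < b → e (g m) (g (m + 1))) :
    Relation.ReflTransGen e (g a) (g b) := by
  induction b, hab using Nat.le_induction with
  | base => exact .refl
  | succ b hab ih =>
    exact (ih fun m h₁ h₂ => h m h₁ (by omega)).tail (h b hab (by omega))

theorem rel_of_rel_of_reflTransGen {r e : β → β → Prop} (he : ∀ x y z, r x y → e y z → r x z)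
    {x y z : β} (hxy : r x y) (hyz : Relation.ReflTransGen e y z) : r x z := by
  induction hyz with
  | refl => exact hxy
  | tail _ h ih => exact he _ _ _ ih h

theorem RelTerminating.or_absorb {e : β → β → Prop} (h : RelTerminating r₁ r₂)
    (h₁₂ : ∀ x y, r₁ x y → r₂ x y)
    (he₁ : ∀ x y z, r₁ x y → e y z → r₁ x z) (he₂ : ∀ x y z, r₂ x y → e y z → r₂ x z) :
    RelTerminating r₁ (fun x y => r₂ x y ∨ e x y) := by
  classical
  rintro ⟨g, hg, hinf⟩
  set C : ℕ → Prop := fun n => r₂ (g n) (g (n + 1))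
  have hC : {n | C n}.Infinite := hinf.mono fun n => h₁₂ _ _
  have hgap : ∀ k, Relation.ReflTransGen e (g (Nat.nth C k + 1)) (g (Nat.nth C (k + 1))) :=
    fun k => reflTransGen_of_forall_lt (Nat.nth_strictMono hC (Nat.lt_succ_self k))
      fun m h₁ h₂ => (hg m).resolve_left fun hm => by
        have := Nat.le_nth_of_lt_nth_succ h₂ hm
        omega
  refine h ⟨fun k => g (Nat.nth C k), fun k => rel_of_rel_of_reflTransGen he₂
    (Nat.nth_mem_of_infinite hC k) (hgap k), Set.Infinite.of_image (Nat.nth C) (hinf.mono ?_)⟩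
  intro n hn
  have hnth : Nat.nth C (Nat.count C n) = n := Nat.nth_count (h₁₂ _ _ hn)
  refine ⟨Nat.count C n, rel_of_rel_of_reflTransGen he₁ ?_ (hgap _), hnth⟩
  simp only [hnth]
  exact hn

theorem RelTerminating.lex_measure (τ : β → ℕ) (h : RelTerminating r₁ r₂) :
    RelTerminating r₁ (fun x y => τ y ≤ τ x ∧ (τ y < τ x ∨ r₂ x y)) := by
  rintro ⟨g, hg, hinf⟩
  have hanti : Antitone (τ ∘ g) := antitone_nat_of_succ_le fun n => (hg n).1
  -- from the index `n₀` where `τ ∘ g` attains its minimum on, `τ` stays constant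
  obtain ⟨n₀, hn₀⟩ := Nat.sInf_mem (Set.range_nonempty (τ ∘ g))
  have hmin : ∀ n, (τ ∘ g) n₀ ≤ (τ ∘ g) n := fun n => hn₀ ▸ Nat.sInf_le ⟨n, rfl⟩
  refine h ⟨fun k => g (n₀ + k), fun k => ((hg (n₀ + k)).2.resolve_left ?_),
    Set.Infinite.of_image (n₀ + ·) ((hinf.sdiff (Set.finite_lt_nat n₀)).mono ?_)⟩
  · have h₁ : τ (g (n₀ + k)) ≤ τ (g n₀) := hanti (Nat.le_add_right n₀ k)
    have h₂ : τ (g n₀) ≤ τ (g (n₀ + k + 1)) := hmin (n₀ + k + 1)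
    omega
  · rintro n ⟨hn, hle⟩
    have hn₀n : n₀ + (n - n₀) = n := Nat.add_sub_cancel' (not_lt.mp hle)
    refine ⟨n - n₀, ?_, hn₀n⟩
    show r₁ (g (n₀ + (n - n₀))) (g (n₀ + (n - n₀) + 1))
    rwa [hn₀n]

end RelTerminating

section EntryStep

variable {β : Type*}

def EntryStep (r : β → β → Prop) (X Y : List β) : Prop :=
  ∃ Xl z z' Xr, X = Xl ++ z :: Xr ∧ Y = Xl ++ z' :: Xr ∧ r z z'

variable {r r₁ r₂ : β → β → Prop}

theorem EntryStep.length_eq {X Y : List β} (h : EntryStep r X Y) : Y.length = X.length := by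
  obtain ⟨Xl, z, z', Xr, rfl, rfl, -⟩ := h
  simp

theorem EntryStep.exists_index {X Y : List β} (h : EntryStep r X Y) (d : β) :
    ∃ i < X.length, r (X.getD i d) (Y.getD i d) ∧ ∀ j ≠ i, X.getD j d = Y.getD j d := by
  obtain ⟨Xl, z, z', Xr, rfl, rfl, hz⟩ := h
  refine ⟨Xl.length, by simp, by simpa using hz, fun j hj => ?_⟩
  rcases lt_or_gt_of_ne hj with hlt | hgt
  · rw [List.getD_append _ _ _ _ hlt, List.getD_append _ _ _ _ hlt]
  · obtain ⟨k, rfl⟩ := Nat.exists_eq_add_of_lt hgt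
    rw [List.getD_append_right _ _ _ _ (by omega), List.getD_append_right _ _ _ _ (by omega),
      show Xl.length + k + 1 - Xl.length = k + 1 by omega]
    simp

theorem RelTerminating.entryStep (hrefl : ∀ x, r₂ x x) (h : RelTerminating r₁ r₂) :
    RelTerminating (EntryStep r₁) (EntryStep r₂) := by
  rintro ⟨X, hX, hinf⟩
  obtain ⟨n₀, Xl, d, -⟩ := hinf.nonempty
  have hlen : ∀ n, (X n).length = (X 0).length := fun n => by
    induction n with
    | zero => rfl
    | succ n ih => rw [(hX n).length_eq, ih]
  have hcoord : ∀ i n, r₂ ((X n).getD i d) ((X (n + 1)).getD i d) := fun i n => by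
    obtain ⟨j, -, hj, hother⟩ := (hX n).exists_index d
    by_cases hij : i = j
    · exact hij ▸ hj
    · exact hother i hij ▸ hrefl _
  obtain ⟨i, -, hi⟩ : ∃ i < (X 0).length,
      {n | r₁ ((X n).getD i d) ((X (n + 1)).getD i d)}.Infinite := by
    by_contra! hfin
    refine hinf (((Set.finite_Iio (X 0).length).biUnion fun i hi =>
      hfin i hi).subset fun n hn => ?_)
    obtain ⟨i, hi, hr, -⟩ := (show EntryStep r₁ (X n) (X (n + 1)) from hn).exists_index d
    exact Set.mem_biUnion (hlen n ▸ hi : i < (X 0).length) hr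
  exact h ⟨fun n => (X n).getD i d, hcoord i, hi⟩

end EntryStep

section Stitching

variable {γ : Type*} {s₁ s₂ : γ → γ → Prop}

theorem exists_path_of_reflTransGen {x y : γ} (h : Relation.ReflTransGen s₂ x y) :
    ∃ k, ∃ q : ℕ → γ, q 0 = x ∧ q k = y ∧ ∀ j < k, s₂ (q j) (q (j + 1)) := by
  induction h with
  | refl => exact ⟨0, fun _ => x, rfl, rfl, by simp⟩
  | @tail b c _ hbc ih =>
    obtain ⟨k, q, hq0, hqk, hq⟩ := ih
    refine ⟨k + 1, fun j => if j ≤ k then q j else c, by simpa using hq0, by simp, fun j hj => ?_⟩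
    rcases Nat.lt_or_ge j k with hjk | hjk
    · simpa [hjk.le, Nat.succ_le_of_lt hjk] using hq j hjk
    · obtain rfl : j = k := by omega
      simpa [hqk] using hbc

theorem not_relTerminating_of_paths (len : ℕ → ℕ) (p : ℕ → ℕ → γ)
    (hjoin : ∀ n, p n (len n + 1) = p (n + 1) 0)
    (hstep : ∀ n j, j ≤ len n → s₂ (p n j) (p n (j + 1)))
    (hF : {n | s₁ (p n 0) (p n 1)}.Infinite) : ¬ RelTerminating s₁ s₂ := by
  -- the `k`-th point of the concatenated path is `p n j` for `st k = (n, j)`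
  let next : ℕ × ℕ → ℕ × ℕ := fun s => if s.2 < len s.1 then (s.1, s.2 + 1) else (s.1 + 1, 0)
  let st : ℕ → ℕ × ℕ := fun k => next^[k] (0, 0)
  have hst : ∀ k, st (k + 1) = next (st k) := fun k => Function.iterate_succ_apply' _ _ _
  have hinv : ∀ k, (st k).2 ≤ len (st k).1 := fun k => by
    induction k with
    | zero => simp [st]
    | succ k ih =>
      rw [hst]
      simp only [next]
      split_ifs with h
      · exact h
      · simp
  have hnext : ∀ k, p (st (k + 1)).1 (st (k + 1)).2 = p (st k).1 ((st k).2 + 1) := fun k => by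
    rw [hst]
    simp only [next]
    split_ifs with h
    · rfl
    · rw [← hjoin, show (st k).2 = len (st k).1 by have := hinv k; omega]
  have hreach : ∀ n, ∃ k, st k = (n, 0) := fun n => by
    induction n with
    | zero => exact ⟨0, rfl⟩
    | succ n ih =>
      obtain ⟨k, hk⟩ := ih
      have hwalk : ∀ j ≤ len n, st (k + j) = (n, j) := fun j => by
        induction j with
        | zero => simpa using hk
        | succ j ihj =>
          intro hj
          rw [← add_assoc, hst, ihj (by omega)]
          simp [next, show j < len n by omega]
      refine ⟨k + len n + 1, ?_⟩
      rw [hst, hwalk _ le_rfl]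
      simp [next]
  refine fun h => h ⟨fun k => p (st k).1 (st k).2, fun k => by
    show s₂ (p (st k).1 (st k).2) (p (st (k + 1)).1 (st (k + 1)).2)
    exact hnext k ▸ hstep _ _ (hinv k),
    Set.Infinite.of_image (fun k => (st k).1) (hF.mono fun n hn => ?_)⟩
  obtain ⟨k, hk⟩ := hreach n
  refine ⟨k, ?_, by simp [hk]⟩
  show s₁ (p (st k).1 (st k).2) (p (st (k + 1)).1 (st (k + 1)).2)
  rw [hnext, hk]
  exact hn

theorem RelTerminating.of_simulation {β : Type*} {r₁ r₂ : β → β → Prop} (ρ : β → γ → Prop)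
    (hρ : ∀ x, ∃ u, ρ x u)
    (hsim : ∀ x y u, ρ x u → r₂ x y → ∃ a b v, Relation.ReflTransGen s₂ u a ∧ s₂ a b ∧
      (r₁ x y → s₁ a b) ∧ Relation.ReflTransGen s₂ b v ∧ ρ y v)
    (h : RelTerminating s₁ s₂) : RelTerminating r₁ r₂ := by
  rintro ⟨f, hf, hinf⟩
  choose! A B V hA hAB hAB₁ hBV hV using hsim
  obtain ⟨u₀, hu₀⟩ := hρ (f 0)
  let U : ℕ → γ := fun n => Nat.rec u₀ (fun n u => V (f n) (f (n + 1)) u) n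
  have hU : ∀ n, ρ (f n) (U n) := fun n => by
    induction n with
    | zero => exact hu₀
    | succ n ih => exact hV _ _ _ ih (hf n)
  let a n := A (f n) (f (n + 1)) (U n)
  let b n := B (f n) (f (n + 1)) (U n)
  have hba : ∀ n, Relation.ReflTransGen s₂ (b n) (a (n + 1)) := fun n =>
    (hBV _ _ _ (hU n) (hf n)).trans (hA _ _ _ (hU (n + 1)) (hf (n + 1)))
  choose len q hq0 hqlen hq using fun n => exists_path_of_reflTransGen (hba n)
  refine not_relTerminating_of_paths len (fun n j => if j = 0 then a n else q n (j - 1))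
    (fun n => by simp [hqlen]) (fun n j hj => ?_) (hinf.mono fun n hn => ?_) h
  · rcases j with _ | j
    · simpa [hq0] using hAB _ _ _ (hU n) (hf n)
    · simpa using hq n j hj
  · simpa [hq0] using hAB₁ _ _ _ (hU n) (hf n) hn

end Stitching

section Cycles

variable {α : Type*}

theorem sim_iff_isRotated {u v : List α} : Sim u v ↔ u ~r v := by
  constructor
  · rintro ⟨w₁, w₂, rfl, rfl⟩
    exact List.isRotated_append
  · rintro ⟨n, rfl⟩
    exact ⟨_, _, (List.take_append_drop (n % u.length) u).symm,
      List.rotate_eq_drop_append_take_mod⟩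

theorem Sim.refl (u : List α) : Sim u u := sim_iff_isRotated.mpr (List.IsRotated.refl u)

theorem Sim.symm {u v : List α} (h : Sim u v) : Sim v u :=
  sim_iff_isRotated.mpr (sim_iff_isRotated.mp h).symm

theorem Sim.trans {u v w : List α} (h₁ : Sim u v) (h₂ : Sim v w) : Sim u w :=
  sim_iff_isRotated.mpr ((sim_iff_isRotated.mp h₁).trans (sim_iff_isRotated.mp h₂))

theorem CycleStep.mono {S R : Set (List α × List α)} (hSR : S ⊆ R) {x y : List α}
    (h : CycleStep S x y) : CycleStep R x y := by
  obtain ⟨l, r, w, hlr, hx, hy⟩ := h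
  exact ⟨l, r, w, hSR hlr, hx, hy⟩

theorem CycleStep.sim_right {R : Set (List α × List α)} {x y z : List α}
    (h : CycleStep R x y) (hyz : Sim y z) : CycleStep R x z := by
  obtain ⟨l, r, w, hlr, hx, hy⟩ := h
  exact ⟨l, r, w, hlr, hx, hy.trans hyz⟩

/-- This is why the `N = len(R) - 1` copies of `M` created per round suffice. -/
theorem exists_rotation_of_sim {l w z : List α} (hl : l ≠ []) (h : Sim (l ++ w) z) :
    ∃ p t x y, z = p ++ t ∧ t ++ p = x ++ l ++ y ∧ w = y ++ x ∧ p.length < l.length := by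
  obtain ⟨t₁, t₂, he, rfl⟩ := h
  have hl' : 0 < l.length := List.length_pos_iff.mpr hl
  rcases List.append_eq_append_iff.mp he with ⟨s, rfl, rfl⟩ | ⟨s, rfl, rfl⟩
  · exact ⟨[], t₂ ++ l ++ s, t₂, s, by simp, by simp, rfl, hl'⟩
  · rcases eq_or_ne t₁ [] with rfl | ht₁
    · exact ⟨[], s ++ w, [], w, by simp, by simp, by simp, hl'⟩
    · refine ⟨s, w ++ t₁, w, [], by simp, by simp, by simp, ?_⟩
      simpa using List.length_pos_iff.mpr ht₁

end Cycles

section SplitOnP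

variable {β : Type*} {p : β → Bool}

theorem splitOnP_append_of_forall {w v b : List β} {Zr : List (List β)}
    (hw : ∀ x ∈ w, p x = false) (hv : v.splitOnP p = b :: Zr) :
    (w ++ v).splitOnP p = (w ++ b) :: Zr := by
  induction w with
  | nil => simpa using hv
  | cons x w ih =>
    simp only [List.mem_cons, forall_eq_or_imp] at hw
    rw [List.cons_append, List.splitOnP_cons_eq_if_modifyHead, if_neg (by simp [hw.1]), ih hw.2]
    simp

theorem exists_splitOnP_append (u : List β) : ∃ Zl a, ∀ {x b : List β} {Zr : List (List β)},
    x.splitOnP p = b :: Zr → (u ++ x).splitOnP p = Zl ++ (a ++ b) :: Zr := by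
  induction u using List.reverseRecOn with
  | nil => exact ⟨[], [], fun hx => by simpa using hx⟩
  | append_singleton u y ih =>
    obtain ⟨Zl, a, h⟩ := ih
    by_cases hy : p y
    · refine ⟨Zl ++ [a], [], fun {x b Zr} hx => ?_⟩
      have hyx : (y :: x).splitOnP p = [] :: b :: Zr := by
        simp [List.splitOnP_cons_eq_if_modifyHead, hy, hx]
      simp [h hyx]
    · refine ⟨Zl, a ++ [y], fun {x b Zr} hx => ?_⟩
      have hyx : (y :: x).splitOnP p = (y :: b) :: Zr := by
        simp [List.splitOnP_cons_eq_if_modifyHead, hy, hx]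
      simp [h hyx]

variable {ρ : List β → List β → Prop} {w w' : List β}

theorem entryStep_splitOnP_infix (u v : List β) (hw : ∀ x ∈ w, p x = false)
    (hw' : ∀ x ∈ w', p x = false) (h : ∀ a b, ρ (a ++ w ++ b) (a ++ w' ++ b)) :
    EntryStep ρ ((u ++ w ++ v).splitOnP p) ((u ++ w' ++ v).splitOnP p) := by
  obtain ⟨Zl, a, hu⟩ := exists_splitOnP_append (p := p) u
  obtain ⟨b, Zr, hv⟩ := List.exists_cons_of_ne_nil (List.splitOnP_ne_nil p v)
  refine ⟨Zl, a ++ w ++ b, a ++ w' ++ b, Zr, ?_, ?_, h a b⟩ <;>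
    rw [List.append_assoc, hu (splitOnP_append_of_forall ‹_› hv), List.append_assoc]

theorem entryStep_splitOnP_token_prefix {t t' : β} (u v : List β) (ht : p t) (ht' : p t')
    (hw : ∀ x ∈ w, p x = false) (hw' : ∀ x ∈ w', p x = false)
    (h : ∀ b, ρ (w ++ b) (w' ++ b)) :
    EntryStep ρ ((u ++ t :: w ++ v).splitOnP p) ((u ++ t' :: w' ++ v).splitOnP p) := by
  obtain ⟨Zl, a, hu⟩ := exists_splitOnP_append (p := p) u
  obtain ⟨b, Zr, hv⟩ := List.exists_cons_of_ne_nil (List.splitOnP_ne_nil p v)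
  refine ⟨Zl ++ [a], w ++ b, w' ++ b, Zr, ?_, ?_, h b⟩ <;>
    simp [hu (b := []), List.splitOnP_cons_eq_if_modifyHead, ht, ht',
      splitOnP_append_of_forall hw hv, splitOnP_append_of_forall hw' hv]

theorem entryStep_splitOnP_token_suffix {t : β} (u v : List β) (ht : p t)
    (hw : ∀ x ∈ w, p x = false) (hw' : ∀ x ∈ w', p x = false)
    (h : ∀ a, ρ (a ++ w) (a ++ w')) :
    EntryStep ρ ((u ++ w ++ t :: v).splitOnP p) ((u ++ w' ++ t :: v).splitOnP p) := by
  obtain ⟨Zl, a, hu⟩ := exists_splitOnP_append (p := p) u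
  refine ⟨Zl, a ++ w, a ++ w', v.splitOnP p, ?_, ?_, h a⟩ <;>
    rw [List.append_assoc, hu (List.splitOnP_append_cons_of_forall_mem ‹_› t ht v)]

end SplitOnP

namespace ShiftSym

variable {α : Type*}

/-- The tokens `B`, `W`, `R`, `E` are never created or destroyed by `shift R`, only renamed. -/
def isToken : ShiftSym α → Bool
  | symB | symW | symR | symE => true
  | _ => false

def isLetter : ShiftSym α → Bool
  | ca _ | cb _ | cc _ => true
  | _ => false

def isM : ShiftSym α → Bool
  | symM => true
  | _ => false

def aLetter : ShiftSym α → Option α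
  | ca a | cc a => some a
  | _ => none

def bLetter : ShiftSym α → Option α
  | cb a => some a
  | _ => none

end ShiftSym

section Shift

open ShiftSym

variable {α : Type*}

def zones (s : List (ShiftSym α)) : List (List (ShiftSym α)) := s.splitOnP isToken

/-- The cyclic word encoded by a zone. Letters rotated to the back travel to the right as
`Σ_B`-letters, the later ones behind the earlier ones, hence the reversal. -/
def zoneWord (z : List (ShiftSym α)) : List α :=
  z.filterMap aLetter ++ (z.filterMap bLetter).reverse

/-- No rule of `shift R` increases it, and `shiftC` fails to rotate the zone word only when it
decreases it. -/
def taint (z : List (ShiftSym α)) : ℕ := (z.dropWhile (fun x => !x.isLetter)).countP isM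

theorem taint_append (x y : List (ShiftSym α)) :
    taint (x ++ y) = if x.any isLetter then taint x + y.countP isM else taint y := by
  induction x with
  | nil => simp
  | cons a x ih =>
    by_cases ha : a.isLetter
    · have hcons : ∀ l, taint (a :: l) = (a :: l).countP isM := by
        simp [taint, ha]
      rw [List.cons_append, hcons, hcons, List.any_cons, ha, ← List.cons_append,
        List.countP_append]
      rfl
    · have hcons : ∀ l, taint (a :: l) = taint l := by
        simp [taint, ha]
      rw [List.cons_append, hcons, hcons, List.any_cons, Bool.eq_false_iff.mpr ha, Bool.false_or,
        ih]

theorem taint_le_countP (z : List (ShiftSym α)) : taint z ≤ z.countP isM :=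
  (List.dropWhile_sublist _).countP_le

theorem taint_infix_le {w w' : List (ShiftSym α)} (hM : w'.countP isM = 0)
    (hL : w'.any isLetter → w.any isLetter) (a b : List (ShiftSym α)) :
    taint (a ++ w' ++ b) ≤ taint (a ++ w ++ b) := by
  have hT : taint w' = 0 := Nat.le_zero.mp (hM ▸ taint_le_countP w')
  have := taint_le_countP b
  simp only [List.append_assoc, taint_append, List.countP_append]
  split_ifs with _ h' h <;> first | omega | exact absurd (hL h') h

theorem taint_infix_lt {a w w' : List (ShiftSym α)} (ha : a.any isLetter)
    (hM : w'.countP isM < w.countP isM) (b : List (ShiftSym α)) :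
    taint (a ++ w' ++ b) < taint (a ++ w ++ b) := by
  simp only [List.append_assoc, taint_append, ha, List.countP_append, if_true]
  omega

def ZoneStep (R : Set (List α × List α)) (z z' : List (ShiftSym α)) : Prop :=
  taint z' ≤ taint z ∧ (taint z' < taint z ∨
    CycleStep R (zoneWord z) (zoneWord z') ∨ Sim (zoneWord z) (zoneWord z'))

variable {R : Set (List α × List α)}

theorem zoneStep_refl (z : List (ShiftSym α)) : ZoneStep R z z :=
  ⟨le_rfl, Or.inr (Or.inr (Sim.refl _))⟩

theorem zoneStep_of_zoneWord_eq {z z' : List (ShiftSym α)} (hT : taint z' ≤ taint z)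
    (hw : zoneWord z = zoneWord z') : ZoneStep R z z' :=
  ⟨hT, Or.inr (Or.inr (hw ▸ Sim.refl _))⟩

theorem zoneStep_infix {w w' : List (ShiftSym α)}
    (hA : w'.filterMap aLetter = w.filterMap aLetter)
    (hB : w'.filterMap bLetter = w.filterMap bLetter)
    (hM : w'.countP isM = 0) (hL : w'.any isLetter → w.any isLetter) (a b : List (ShiftSym α)) :
    ZoneStep R (a ++ w ++ b) (a ++ w' ++ b) :=
  zoneStep_of_zoneWord_eq (taint_infix_le hM hL a b) (by simp [zoneWord, hA, hB])

theorem cycleStep_zoneWord_infix {l r : List α} (hlr : (l, r) ∈ R) (a b : List (ShiftSym α)) :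
    CycleStep R (zoneWord (a ++ symL :: l.map ca ++ b))
      (zoneWord (a ++ symD :: r.map ca ++ b)) := by
  set W := b.filterMap aLetter ++ (b.filterMap bLetter).reverse ++ (a.filterMap bLetter).reverse
  refine ⟨l, r, W ++ a.filterMap aLetter, hlr, ⟨l ++ W, a.filterMap aLetter, by simp, ?_⟩,
    ⟨r ++ W, a.filterMap aLetter, by simp, ?_⟩⟩ <;>
    simp [W, zoneWord, List.filterMap_cons, List.filterMap_map, Function.comp_def, aLetter, bLetter]

/-- The SRS `S'` of `shift_rel(S, R)`. -/
def shiftRelSRS (S : Set (List α × List α)) : Set (List (ShiftSym α) × List (ShiftSym α)) :=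
  { p | ∃ l r, (l, r) ∈ S ∧ p = (symL :: l.map ca, symD :: r.map ca) }

theorem forall_isToken_cons_map_ca {x : ShiftSym α} (hx : x.isToken = false) (l : List α) :
    ∀ y ∈ x :: l.map ca, y.isToken = false := by
  simp only [List.mem_cons, List.mem_map]
  rintro y (rfl | ⟨a, -, rfl⟩)
  exacts [hx, rfl]

theorem entryStep_zones_of_step_shiftRelSRS {S : Set (List α × List α)} {x y : List (ShiftSym α)}
    (h : Step (shiftRelSRS S) x y) :
    EntryStep (fun z z' => CycleStep S (zoneWord z) (zoneWord z')) (zones x) (zones y) := by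
  obtain ⟨u, v, _, _, ⟨l, r, hlr, hp⟩, rfl, rfl⟩ := h
  obtain ⟨rfl, rfl⟩ := Prod.mk.inj hp
  exact entryStep_splitOnP_infix u v (forall_isToken_cons_map_ca rfl l)
    (forall_isToken_cons_map_ca rfl r) (cycleStep_zoneWord_infix hlr)

theorem filterMap_eq_nil_of_any_isLetter_eq_false {z : List (ShiftSym α)}
    (hz : z.any isLetter = false) : z.filterMap aLetter = [] ∧ z.filterMap bLetter = [] := by
  simp only [List.any_eq_false, Bool.not_eq_true] at hz
  constructor <;> refine List.filterMap_eq_nil_iff.mpr fun x hx => ?_ <;>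
    have := hz x hx <;> cases x <;> first | rfl | cases this

theorem zoneStep_shiftC (x : α) (a b : List (ShiftSym α)) :
    ZoneStep R (a ++ [symM, symV, ca x] ++ b) (a ++ [symV, cb x] ++ b) := by
  refine ⟨taint_infix_le rfl (fun _ => rfl) a b, ?_⟩
  cases ha : a.any isLetter
  · obtain ⟨hA, hB⟩ := filterMap_eq_nil_of_any_isLetter_eq_false ha
    refine Or.inr (Or.inr ⟨[x], b.filterMap aLetter ++ (b.filterMap bLetter).reverse, ?_, ?_⟩) <;>
      simp [zoneWord, hA, hB, List.filterMap_cons, aLetter, bLetter]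
  · exact Or.inl (taint_infix_lt ha (by simp [isM]) b)

theorem zoneStep_shiftH {l r : List α} (hl : l ≠ []) (hlr : (l, r) ∈ R) (a b : List (ShiftSym α)) :
    ZoneStep R (a ++ symL :: l.map ca ++ b) (a ++ symD :: r.map ca ++ b) := by
  refine ⟨taint_infix_le ?_ ?_ a b, Or.inr (Or.inl (cycleStep_zoneWord_infix hlr a b))⟩
  · simp [List.countP_map, Function.comp_def, isM]
  · obtain ⟨c, l, rfl⟩ := List.exists_cons_of_ne_nil hl
    simp [isLetter]

theorem entryStep_zones_of_mem_shiftSRS (hne : ∀ p ∈ R, p.1 ≠ [])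
    {lhs rhs : List (ShiftSym α)} (hm : (lhs, rhs) ∈ shiftSRS R) (u v : List (ShiftSym α)) :
    EntryStep (ZoneStep R) (zones (u ++ lhs ++ v)) (zones (u ++ rhs ++ v)) := by
  simp only [shiftSRS, Set.mem_ofPred_eq, Prod.mk.injEq] at hm
  rcases hm with ⟨rfl, rfl⟩ | ⟨rfl, rfl⟩ | ⟨x, rfl, rfl⟩ | ⟨x, y, rfl, rfl⟩ | ⟨x, rfl, rfl⟩ |
    ⟨rfl, rfl⟩ | ⟨x, rfl, rfl⟩ | ⟨l, r, hlr, rfl, rfl⟩ | ⟨x, rfl, rfl⟩ | ⟨rfl, rfl⟩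
  · -- shiftA
    have hMV : ∀ y ∈ List.replicate (lenSRS R - 1) (symM : ShiftSym α) ++ [symV],
        y.isLetter = false ∧ y.isToken = false := by
      simp only [List.mem_append, List.mem_replicate, List.mem_singleton]
      rintro y (⟨-, rfl⟩ | rfl) <;> exact ⟨rfl, rfl⟩
    refine entryStep_splitOnP_token_prefix u v rfl rfl (by simp) (fun y hy => (hMV y hy).2)
      (fun b => zoneStep_of_zoneWord_eq ?_ ?_)
    · rw [taint_append, List.any_eq_false.mpr fun y hy => by simp [(hMV y hy).1]]
      rfl
    · simp [zoneWord, List.filterMap_replicate, List.filterMap_cons, aLetter, bLetter]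
  · -- shiftB
    exact entryStep_splitOnP_infix u v (by simp [isToken]) (by simp)
      (zoneStep_infix rfl rfl rfl (by simp))
  · -- shiftC
    exact entryStep_splitOnP_infix u v (by simp [isToken]) (by simp [isToken]) (zoneStep_shiftC x)
  · -- shiftD
    exact entryStep_splitOnP_infix u v (by simp [isToken]) (by simp [isToken])
      (zoneStep_infix rfl rfl rfl (fun _ => rfl))
  · -- shiftE
    have := entryStep_splitOnP_token_suffix (p := isToken) (w := [cb x]) (w' := [ca x])
      (t := symE) (ρ := ZoneStep R) u v rfl
      (by simp [isToken]) (by simp [isToken]) (fun a => zoneStep_of_zoneWord_eq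
        (by simpa using taint_infix_le (w := [cb x]) (w' := [ca x]) rfl (fun _ => rfl) a [])
        (by simp [zoneWord, List.filterMap_cons, aLetter, bLetter]))
    simpa [zones] using this
  · -- shiftF
    exact entryStep_splitOnP_token_prefix u v rfl rfl (by simp [isToken]) (by simp [isToken])
      (zoneStep_infix rfl rfl rfl (by simp [isLetter]) [])
  · -- shiftG
    exact entryStep_splitOnP_infix u v (by simp [isToken]) (by simp [isToken])
      (zoneStep_infix rfl rfl rfl (fun _ => rfl))
  · -- shiftH
    exact entryStep_splitOnP_infix u v (forall_isToken_cons_map_ca rfl l)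
      (forall_isToken_cons_map_ca rfl r) (zoneStep_shiftH (hne _ hlr) hlr)
  · -- shiftI
    exact entryStep_splitOnP_infix u v (by simp [isToken]) (by simp [isToken])
      (zoneStep_infix rfl rfl rfl (fun _ => rfl))
  · -- shiftJ
    exact entryStep_splitOnP_token_prefix u v rfl rfl (by simp [isToken]) (by simp)
      (zoneStep_infix rfl rfl rfl (by simp) [])

theorem entryStep_zones_of_step_shiftSRS (hne : ∀ p ∈ R, p.1 ≠ []) {x y : List (ShiftSym α)}
    (h : Step (shiftSRS R) x y) : EntryStep (ZoneStep R) (zones x) (zones y) := by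
  obtain ⟨u, v, lhs, rhs, hm, rfl, rfl⟩ := h
  exact entryStep_zones_of_mem_shiftSRS hne hm u v

section Simulation

open Relation

variable {R : Set (List α × List α)}

theorem shiftSRS_erase_M (j : ℕ) (u v : List (ShiftSym α)) :
    ReflTransGen (Step (shiftSRS R)) (u ++ List.replicate j symM ++ v) (u ++ v) := by
  induction j with
  | zero => simpa using .refl
  | succ j ih =>
    refine .head ⟨u, List.replicate j symM ++ v, [symM], [], by simp [shiftSRS],
      by simp [List.replicate_succ], rfl⟩ ?_
    simpa using ih

theorem shiftSRS_move_cb (a : α) (p : List α) (u v : List (ShiftSym α)) :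
    ReflTransGen (Step (shiftSRS R)) (u ++ cb a :: p.map ca ++ v) (u ++ p.map ca ++ cb a :: v) := by
  induction p generalizing u with
  | nil => simpa using .refl
  | cons x p ih =>
    refine .head ⟨u, p.map ca ++ v, [cb a, ca x], [ca x, cb a], by simp [shiftSRS], by simp,
      rfl⟩ ?_
    simpa using ih (u ++ [ca x])

theorem shiftSRS_scan_L (x : List α) (u v : List (ShiftSym α)) :
    ReflTransGen (Step (shiftSRS R)) (u ++ symL :: x.map ca ++ v) (u ++ x.map cc ++ symL :: v) := by
  induction x generalizing u with
  | nil => simpa using .refl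
  | cons c x ih =>
    refine .head ⟨u, x.map ca ++ v, [symL, ca c], [cc c, symL], by simp [shiftSRS], by simp,
      rfl⟩ ?_
    simpa using ih (u ++ [cc c])

theorem shiftSRS_return_D (x : List α) (u v : List (ShiftSym α)) :
    ReflTransGen (Step (shiftSRS R)) (u ++ x.map cc ++ symD :: v) (u ++ symD :: x.map ca ++ v) := by
  induction x using List.reverseRecOn generalizing v with
  | nil => simpa using .refl
  | append_singleton x c ih =>
    refine .head ⟨u ++ x.map cc, v, [cc c, symD], [symD, ca c], by simp [shiftSRS], by simp,
      rfl⟩ ?_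
    simpa using ih (ca c :: v)

/-- `W Mʲ⁺¹ V a t E →* W Mʲ V t a E` (shiftC, shiftD, shiftE), iterated. -/
theorem shiftSRS_rotate (p : List α) (j : ℕ) (t : List α) :
    ReflTransGen (Step (shiftSRS R))
      (symW :: List.replicate (j + p.length) symM ++ symV :: (p ++ t).map ca ++ [symE])
      (symW :: List.replicate j symM ++ symV :: (t ++ p).map ca ++ [symE]) := by
  induction p generalizing t with
  | nil => simpa using .refl
  | cons a p ih =>
    have hC : Step (shiftSRS R)
        (symW :: List.replicate (j + (a :: p).length) symM ++ symV :: (a :: p ++ t).map ca ++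
          [symE])
        (symW :: List.replicate (j + p.length) symM ++ symV :: cb a :: (p ++ t).map ca ++ [symE]) :=
      ⟨symW :: List.replicate (j + p.length) symM, (p ++ t).map ca ++ [symE],
        [symM, symV, ca a], [symV, cb a], by simp [shiftSRS],
        by simp [← add_assoc, List.replicate_succ'], by simp⟩
    have hE : Step (shiftSRS R)
        (symW :: List.replicate (j + p.length) symM ++ symV :: (p ++ t).map ca ++ [cb a, symE])
        (symW :: List.replicate (j + p.length) symM ++ symV :: (p ++ t ++ [a]).map ca ++ [symE]) :=
      ⟨symW :: List.replicate (j + p.length) symM ++ symV :: (p ++ t).map ca, [], [cb a, symE],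
        [ca a, symE], by simp [shiftSRS], by simp, by simp⟩
    refine .head hC (.trans ?_ (.head hE ?_))
    · convert shiftSRS_move_cb (R := R) a (p ++ t)
        (symW :: List.replicate (j + p.length) symM ++ [symV]) [symE] using 1 <;> simp
    · simpa using ih (t ++ [a])

def frame (z : List α) : List (ShiftSym α) := symB :: z.map ca ++ [symE]

theorem length_le_lenSRS (hfin : R.Finite) {l r : List α} (hlr : (l, r) ∈ R) :
    l.length ≤ lenSRS R :=
  le_csSup (hfin.image _).bddAbove ⟨(l, r), hlr, rfl⟩

theorem shiftSRS_frame_to_redex {l x y p t : List α} (hp : p.length ≤ lenSRS R - 1)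
    (ht : t ++ p = x ++ l ++ y) :
    ReflTransGen (Step (shiftSRS R)) (frame (p ++ t))
      (symR :: x.map cc ++ symL :: l.map ca ++ (y.map ca ++ [symE])) := by
  obtain ⟨j, hj⟩ : ∃ j, j + p.length = lenSRS R - 1 := ⟨_, Nat.sub_add_cancel hp⟩
  have hA : Step (shiftSRS R) (frame (p ++ t))
      (symW :: List.replicate (j + p.length) symM ++ symV :: (p ++ t).map ca ++ [symE]) :=
    ⟨[], (p ++ t).map ca ++ [symE], _, _, Or.inl rfl, by simp [frame],
      by simp [hj]⟩
  refine .head hA ((shiftSRS_rotate p j t).trans ?_)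
  have hF : Step (shiftSRS R) (symW :: symV :: (t ++ p).map ca ++ [symE])
      (symR :: symL :: (x ++ l ++ y).map ca ++ [symE]) :=
    ⟨[], (t ++ p).map ca ++ [symE], [symW, symV], [symR, symL], by simp [shiftSRS], by simp,
      by simp [ht]⟩
  refine .trans ?_ (.head hF ?_)
  · convert shiftSRS_erase_M (R := R) j [symW] (symV :: (t ++ p).map ca ++ [symE]) using 1 <;> simp
  · convert shiftSRS_scan_L (R := R) x [symR] ((l ++ y).map ca ++ [symE]) using 1 <;> simp

theorem shiftSRS_redex_to_frame (r x y : List α) :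
    ReflTransGen (Step (shiftSRS R)) (symR :: x.map cc ++ symD :: r.map ca ++ (y.map ca ++ [symE]))
      (frame (x ++ r ++ y)) := by
  have hJ : Step (shiftSRS R) (symR :: symD :: (x ++ r ++ y).map ca ++ [symE])
      (frame (x ++ r ++ y)) :=
    ⟨[], (x ++ r ++ y).map ca ++ [symE], [symR, symD], [symB], by simp [shiftSRS], by simp,
      by simp [frame]⟩
  refine .tail ?_ hJ
  simpa using shiftSRS_return_D (R := R) x [symR] (r.map ca ++ (y.map ca ++ [symE]))

theorem exists_shiftSRS_round (hfin : R.Finite) {l r w z : List α} (hlr : (l, r) ∈ R) (hl : l ≠ [])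
    (h : Sim (l ++ w) z) : ∃ z' u v, Sim (r ++ w) z' ∧
      ReflTransGen (Step (shiftSRS R)) (frame z) (u ++ symL :: l.map ca ++ v) ∧
      ReflTransGen (Step (shiftSRS R)) (u ++ symD :: r.map ca ++ v) (frame z') := by
  obtain ⟨p, t, x, y, rfl, ht, rfl, hp⟩ := exists_rotation_of_sim hl h
  have hN : p.length ≤ lenSRS R - 1 := by have := length_le_lenSRS hfin hlr; omega
  exact ⟨x ++ r ++ y, symR :: x.map cc, y.map ca ++ [symE], ⟨r ++ y, x, by simp, by simp⟩,
    by simpa using shiftSRS_frame_to_redex hN ht, by simpa using shiftSRS_redex_to_frame r x y⟩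

end Simulation

theorem exists_shiftSRS_steps_of_cycleStep {S R : Set (List α × List α)} (hSR : S ⊆ R)
    (hfin : R.Finite) (hne : ∀ p ∈ R, p.1 ≠ []) (x y : List α) (u : List (ShiftSym α))
    (hxu : ∃ z, Sim x z ∧ u = frame z) (hxy : CycleStep R x y) :
    ∃ a b v, Relation.ReflTransGen (Step (shiftSRS R)) u a ∧ Step (shiftSRS R) a b ∧
      (CycleStep S x y → Step (shiftRelSRS S) a b) ∧
      Relation.ReflTransGen (Step (shiftSRS R)) b v ∧ ∃ z', Sim y z' ∧ v = frame z' := by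
  obtain ⟨z, hxz, rfl⟩ := hxu
  obtain ⟨l, r, w, hlr, hlrS, hx, hy⟩ : ∃ l r w, (l, r) ∈ R ∧ (CycleStep S x y → (l, r) ∈ S) ∧
      Sim (l ++ w) x ∧ Sim (r ++ w) y := by
    by_cases hS : CycleStep S x y
    · obtain ⟨l, r, w, hlr, hx, hy⟩ := hS
      exact ⟨l, r, w, hSR hlr, fun _ => hlr, hx, hy⟩
    · obtain ⟨l, r, w, hlr, hx, hy⟩ := hxy
      exact ⟨l, r, w, hlr, fun h => absurd h hS, hx, hy⟩
  obtain ⟨z', u, v, hz', hto, hfrom⟩ := exists_shiftSRS_round hfin hlr (hne _ hlr) (hx.trans hxz)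
  have hH : (symL :: l.map ca, symD :: r.map ca) ∈ shiftSRS R :=
    by simpa [shiftSRS] using ⟨l, r, hlr, rfl, rfl⟩
  exact ⟨_, _, _, hto, ⟨u, v, _, _, hH, rfl, rfl⟩,
    fun h => ⟨u, v, _, _, ⟨l, r, hlrS h, rfl⟩, rfl, rfl⟩, hfrom, z', hy.symm.trans hz', rfl⟩

end Shift

open ShiftSym in
theorem shiftRel_sound_and_complete_general {α : Type*} (S R : Set (List α × List α))
    (hSR : S ⊆ R) (hfin : R.Finite) (hne : ∀ p ∈ R, p.1 ≠ []) :
    RelTerminating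
        (Step { p : List (ShiftSym α) × List (ShiftSym α) |
                  ∃ l r, (l, r) ∈ S ∧ p = (symL :: l.map ca, symD :: r.map ca) })
        (Step (shiftSRS R)) ↔
      RelTerminating (CycleStep S) (CycleStep R) := by
  constructor
  · exact RelTerminating.of_simulation (fun x u => ∃ z, Sim x z ∧ u = frame z)
      (fun x => ⟨frame x, x, Sim.refl x, rfl⟩) (exists_shiftSRS_steps_of_cycleStep hSR hfin hne)
  · intro h
    have hmodSim := h.or_absorb (fun _ _ => CycleStep.mono hSR)
      (fun _ _ _ => CycleStep.sim_right) (fun _ _ _ => CycleStep.sim_right)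
    have hzone := (hmodSim.comap zoneWord).lex_measure taint
    exact ((hzone.entryStep zoneStep_refl).comap zones).mono
      (fun _ _ => entryStep_zones_of_step_shiftRelSRS)
      (fun _ _ => entryStep_zones_of_step_shiftSRS hne)

open ShiftSym in
/-- soundness and completeness of `shift_rel` for relative termination. -/
theorem shiftRel_sound_and_complete {α : Type*} [Finite α] (S R : Set (List α × List α))
    (hSR : S ⊆ R) (hfin : R.Finite) (hne : ∀ p ∈ R, p.1 ≠ []) :
    RelTerminating
        (Step { p : List (ShiftSym α) × List (ShiftSym α) |
                  ∃ l r, (l, r) ∈ S ∧ p = (symL :: l.map ca, symD :: r.map ca) })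
        (Step (shiftSRS R)) ↔
      RelTerminating (CycleStep S) (CycleStep R) :=
  shiftRel_sound_and_complete_general S R hSR hfin hne

end CycleRewriting
end

section
/- Let Σ_A be an alphabet and u, v ∈ Σ_A*. If u ~ v, then B u E →_{rot(Σ_A)}* W v E. -/
namespace CycleRewriting

/-- The alphabet of `rot Σ_A`/`rotate R`: the original alphabet `Σ_A`, four fresh
copies `Σ_B, Σ_C, Σ_D, Σ_E`, and fresh symbols `B, E, W, R, G, O, C, L, S, F, f`. -/
inductive RotSym (α : Type*) where
  | ca : α → RotSym α            -- Σ_A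
  | cb : α → RotSym α            -- Σ_B
  | cc : α → RotSym α            -- Σ_C
  | cd : α → RotSym α            -- Σ_D
  | ce : α → RotSym α            -- Σ_E
  | symB : RotSym α
  | symE : RotSym α
  | symW : RotSym α
  | symR : RotSym α
  | symG : RotSym α
  | symO : RotSym α
  | symC : RotSym α
  | symL : RotSym α
  | symS : RotSym α
  | symF : RotSym α
  | symf : RotSym α

open RotSym in
/-- The string rewrite system `rot Σ_A`. -/
def rotSRS (α : Type*) : Set (List (RotSym α) × List (RotSym α)) :=
  { p | p = ([symB, symE], [symW, symE]) ∨                                    -- rotA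
        (∃ a : α, p = ([symB, ca a], [symO, symC, cd a, symG])) ∨             -- rotB
        (∃ a : α, p = ([symG, ca a], [cd a, symG])) ∨                         -- rotC
        (∃ a : α, p = ([symG, ca a], [symL, cc a, symS])) ∨                   -- rotD
        p = ([symG, symE], [symF, symE]) ∨                                    -- rotE
        (∃ c d : α, p = ([cd d, symL, cc c], [symL, cc c, cb d])) ∨           -- rotF
        (∃ c : α, p = ([symC, symL, cc c], [ce c, symC, symR])) ∨             -- rotG
        (∃ b : α, p = ([symR, cb b], [cd b, symR])) ∨                         -- rotH
        (∃ a : α, p = ([symR, symS, ca a], [symL, cc a, symS])) ∨             -- rotI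
        p = ([symR, symS, symE], [symF, symE]) ∨                              -- rotJ
        (∃ d : α, p = ([cd d, symF], [symF, ca d])) ∨                         -- rotK
        p = ([symC, symF], [symf]) ∨                                          -- rotL
        (∃ e : α, p = ([ce e, symf], [symf, ca e])) ∨                         -- rotM
        p = ([symO, symf], [symW]) }                                          -- rotN

open RotSym in
/-- The transformation `rotate`: `rot Σ_A` plus `W ℓ → B r` for every rule `ℓ → r`. -/
def rotateSRS {α : Type*} (R : Set (List α × List α)) :
    Set (List (RotSym α) × List (RotSym α)) :=
  rotSRS α ∪ { p | ∃ l r, (l, r) ∈ R ∧ p = (symW :: l.map ca, symB :: r.map ca) }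

section Aux

open RotSym

variable {α : Type*}

/-- notation for the reduction -/
local notation:50 a " ⟶* " b => Relation.ReflTransGen (Step (rotSRS α)) a b

lemma stepRT {l r : List (RotSym α)} (h : (l, r) ∈ rotSRS α)
    (x y a b : List (RotSym α)) (ha : a = x ++ l ++ y) (hb : b = x ++ r ++ y) :
    a ⟶* b := by
  subst ha hb
  exact Relation.ReflTransGen.single ⟨x, y, l, r, h, rfl, rfl⟩

lemma rtCast {a b a' b' : List (RotSym α)} (ea : a' = a) (eb : b' = b)
    (h : a ⟶* b) : (a' ⟶* b') := by subst ea eb; exact h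

lemma mem_rotA : (([symB, symE], [symW, symE]) : List (RotSym α) × List (RotSym α)) ∈ rotSRS α :=
  Or.inl rfl

lemma mem_rotB (a : α) : ([symB, ca a], [symO, symC, cd a, symG]) ∈ rotSRS α :=
  Or.inr (Or.inl ⟨a, rfl⟩)

lemma mem_rotC (a : α) : ([symG, ca a], [cd a, symG]) ∈ rotSRS α :=
  Or.inr (Or.inr (Or.inl ⟨a, rfl⟩))

lemma mem_rotD (a : α) : ([symG, ca a], [symL, cc a, symS]) ∈ rotSRS α :=
  Or.inr (Or.inr (Or.inr (Or.inl ⟨a, rfl⟩)))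

lemma mem_rotE : (([symG, symE], [symF, symE]) : List (RotSym α) × List (RotSym α)) ∈ rotSRS α :=
  Or.inr (Or.inr (Or.inr (Or.inr (Or.inl rfl))))

lemma mem_rotF (c d : α) : ([cd d, symL, cc c], [symL, cc c, cb d]) ∈ rotSRS α :=
  Or.inr (Or.inr (Or.inr (Or.inr (Or.inr (Or.inl ⟨c, d, rfl⟩)))))

lemma mem_rotG (c : α) : ([symC, symL, cc c], [ce c, symC, symR]) ∈ rotSRS α :=
  Or.inr (Or.inr (Or.inr (Or.inr (Or.inr (Or.inr (Or.inl ⟨c, rfl⟩))))))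

lemma mem_rotH (b : α) : ([symR, cb b], [cd b, symR]) ∈ rotSRS α :=
  Or.inr (Or.inr (Or.inr (Or.inr (Or.inr (Or.inr (Or.inr (Or.inl ⟨b, rfl⟩)))))))

lemma mem_rotI (a : α) : ([symR, symS, ca a], [symL, cc a, symS]) ∈ rotSRS α :=
  Or.inr (Or.inr (Or.inr (Or.inr (Or.inr (Or.inr (Or.inr (Or.inr (Or.inl ⟨a, rfl⟩))))))))

lemma mem_rotJ : (([symR, symS, symE], [symF, symE]) : List (RotSym α) × List (RotSym α)) ∈ rotSRS α :=
  Or.inr (Or.inr (Or.inr (Or.inr (Or.inr (Or.inr (Or.inr (Or.inr (Or.inr (Or.inl rfl)))))))))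

lemma mem_rotK (d : α) : ([cd d, symF], [symF, ca d]) ∈ rotSRS α :=
  Or.inr (Or.inr (Or.inr (Or.inr (Or.inr (Or.inr (Or.inr (Or.inr (Or.inr (Or.inr (Or.inl ⟨d, rfl⟩))))))))))

lemma mem_rotL : (([symC, symF], [symf]) : List (RotSym α) × List (RotSym α)) ∈ rotSRS α :=
  Or.inr (Or.inr (Or.inr (Or.inr (Or.inr (Or.inr (Or.inr (Or.inr (Or.inr (Or.inr (Or.inr (Or.inl rfl)))))))))))

lemma mem_rotM (e : α) : ([ce e, symf], [symf, ca e]) ∈ rotSRS α :=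
  Or.inr (Or.inr (Or.inr (Or.inr (Or.inr (Or.inr (Or.inr (Or.inr (Or.inr (Or.inr (Or.inr (Or.inr (Or.inl ⟨e, rfl⟩))))))))))))

lemma mem_rotN : (([symO, symf], [symW]) : List (RotSym α) × List (RotSym α)) ∈ rotSRS α :=
  Or.inr (Or.inr (Or.inr (Or.inr (Or.inr (Or.inr (Or.inr (Or.inr (Or.inr (Or.inr (Or.inr (Or.inr (Or.inr rfl))))))))))))

/-- rotC loop: `G` moves right over `Σ_A` symbols turning them into `Σ_D`. -/
lemma loopC (x y : List (RotSym α)) : ∀ w : List α,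
    (x ++ [symG] ++ w.map ca ++ y) ⟶* (x ++ w.map cd ++ [symG] ++ y) := by
  intro w
  induction w generalizing x with
  | nil => exact rtCast (by simp) (by simp) (Relation.ReflTransGen.refl (a := x ++ symG :: y))
  | cons a w ih =>
    refine Relation.ReflTransGen.trans
      (stepRT (mem_rotC a) x (w.map ca ++ y) _ _ (by simp) rfl) ?_
    exact rtCast (by simp) (by simp) (ih (x ++ [cd a]))

/-- rotF loop: `L c` moves left over `Σ_D` symbols turning them into `Σ_B`. -/
lemma loopF (x y : List (RotSym α)) (c : α) : ∀ w z : List α,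
    (x ++ w.map cd ++ [symL, cc c] ++ z.map cb ++ y) ⟶*
      (x ++ [symL, cc c] ++ (w ++ z).map cb ++ y) := by
  intro w
  induction w using List.reverseRecOn with
  | nil =>
    intro z
    exact rtCast (by simp) (by simp)
      (Relation.ReflTransGen.refl (a := x ++ symL :: cc c :: (z.map cb ++ y)))
  | append_singleton w d ih =>
    intro z
    refine Relation.ReflTransGen.trans
      (stepRT (mem_rotF c d) (x ++ w.map cd) (z.map cb ++ y) _ _ (by simp) rfl) ?_
    exact rtCast (by simp) (by simp) (ih (d :: z))

/-- rotH loop: `R` moves right over `Σ_B` symbols turning them into `Σ_D`. -/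
lemma loopH (x y : List (RotSym α)) : ∀ w : List α,
    (x ++ [symR] ++ w.map cb ++ y) ⟶* (x ++ w.map cd ++ [symR] ++ y) := by
  intro w
  induction w generalizing x with
  | nil => exact rtCast (by simp) (by simp) (Relation.ReflTransGen.refl (a := x ++ symR :: y))
  | cons b w ih =>
    refine Relation.ReflTransGen.trans
      (stepRT (mem_rotH b) x (w.map cb ++ y) _ _ (by simp) rfl) ?_
    exact rtCast (by simp) (by simp) (ih (x ++ [cd b]))

/-- rotK loop: `F` moves left over `Σ_D` symbols turning them into `Σ_A`. -/
lemma loopK (x y : List (RotSym α)) : ∀ w z : List α,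
    (x ++ w.map cd ++ [symF] ++ z.map ca ++ y) ⟶*
      (x ++ [symF] ++ (w ++ z).map ca ++ y) := by
  intro w
  induction w using List.reverseRecOn with
  | nil =>
    intro z
    exact rtCast (by simp) (by simp)
      (Relation.ReflTransGen.refl (a := x ++ symF :: (z.map ca ++ y)))
  | append_singleton w d ih =>
    intro z
    refine Relation.ReflTransGen.trans
      (stepRT (mem_rotK d) (x ++ w.map cd) (z.map ca ++ y) _ _ (by simp) rfl) ?_
    exact rtCast (by simp) (by simp) (ih (d :: z))

/-- rotM loop: `f` moves left over `Σ_E` symbols turning them into `Σ_A`. -/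
lemma loopM (x y : List (RotSym α)) : ∀ w z : List α,
    (x ++ w.map ce ++ [symf] ++ z.map ca ++ y) ⟶*
      (x ++ [symf] ++ (w ++ z).map ca ++ y) := by
  intro w
  induction w using List.reverseRecOn with
  | nil =>
    intro z
    exact rtCast (by simp) (by simp)
      (Relation.ReflTransGen.refl (a := x ++ symf :: (z.map ca ++ y)))
  | append_singleton w e ih =>
    intro z
    refine Relation.ReflTransGen.trans
      (stepRT (mem_rotM e) (x ++ w.map ce) (z.map ca ++ y) _ _ (by simp) rfl) ?_
    exact rtCast (by simp) (by simp) (ih (e :: z))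

/-- the main scanning loop: one symbol is carried to the `Σ_E` block per round. -/
lemma loopScan : ∀ (t p : List α) (c : α) (w : List α),
    ([symO] ++ p.map ce ++ [symC] ++ w.map cd ++ [symL, cc c, symS] ++ t.map ca ++ [symE]) ⟶*
      ([symO] ++ (p ++ c :: t).map ce ++ [symC] ++ w.map cd ++ [symF, symE]) := by
  intro t
  induction t with
  | nil =>
    intro p c w
    -- move L c left over the d-block
    refine Relation.ReflTransGen.trans
      (rtCast (by simp) rfl (loopF ([symO] ++ p.map ce ++ [symC]) ([symS, symE]) c w [])) ?_
    -- rotG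
    refine Relation.ReflTransGen.trans
      (stepRT (mem_rotG c) ([symO] ++ p.map ce)
        ((w ++ []).map cb ++ [symS, symE]) _ _ (by simp) rfl) ?_
    -- rotH loop
    refine Relation.ReflTransGen.trans
      (rtCast (by simp) rfl (loopH ([symO] ++ p.map ce ++ [ce c, symC]) ([symS, symE]) (w ++ []))) ?_
    -- rotJ
    refine stepRT mem_rotJ ([symO] ++ p.map ce ++ [ce c, symC] ++ w.map cd) []
      _ _ (by simp) (by simp)
  | cons a t ih =>
    intro p c w
    refine Relation.ReflTransGen.trans
      (rtCast (by simp) rfl (loopF ([symO] ++ p.map ce ++ [symC]) ([symS] ++ (a :: t).map ca ++ [symE]) c w [])) ?_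
    refine Relation.ReflTransGen.trans
      (stepRT (mem_rotG c) ([symO] ++ p.map ce)
        ((w ++ []).map cb ++ [symS] ++ (a :: t).map ca ++ [symE]) _ _ (by simp) rfl) ?_
    refine Relation.ReflTransGen.trans
      (rtCast (by simp) rfl (loopH ([symO] ++ p.map ce ++ [ce c, symC])
        ([symS] ++ (a :: t).map ca ++ [symE]) (w ++ []))) ?_
    -- rotI
    refine Relation.ReflTransGen.trans
      (stepRT (mem_rotI a) ([symO] ++ p.map ce ++ [ce c, symC] ++ w.map cd)
        (t.map ca ++ [symE]) _ _ (by simp) rfl) ?_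
    exact rtCast (by simp) (by simp) (ih (p ++ [c]) a w)

/-- final phase: from `O (Σ_E block) C (Σ_D block) F E` to `W .. E`. -/
lemma finish (p w : List α) :
    ([symO] ++ p.map ce ++ [symC] ++ w.map cd ++ [symF, symE]) ⟶*
      (symW :: (p ++ w).map ca ++ [symE]) := by
  -- rotK loop
  refine Relation.ReflTransGen.trans
    (rtCast (by simp) rfl (loopK ([symO] ++ p.map ce ++ [symC]) [symE] w [])) ?_
  -- rotL
  refine Relation.ReflTransGen.trans
    (stepRT mem_rotL ([symO] ++ p.map ce) ((w ++ []).map ca ++ [symE]) _ _ (by simp) rfl) ?_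
  -- rotM loop
  refine Relation.ReflTransGen.trans
    (rtCast (by simp) rfl (loopM [symO] [symE] p (w ++ []))) ?_
  -- rotN
  refine stepRT mem_rotN [] ((p ++ (w ++ [])).map ca ++ [symE]) _ _ (by simp) (by simp)

/-- identity rotation: `B u E →* W u E`. -/
lemma rot_id (u : List α) :
    (symB :: u.map ca ++ [symE]) ⟶* (symW :: u.map ca ++ [symE]) := by
  cases u with
  | nil => exact stepRT mem_rotA [] [] _ _ (by simp) (by simp)
  | cons a t =>
    -- rotB
    refine Relation.ReflTransGen.trans
      (stepRT (mem_rotB a) [] (t.map ca ++ [symE]) _ _ (by simp) rfl) ?_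
    -- rotC loop
    refine Relation.ReflTransGen.trans
      (rtCast (by simp) rfl (loopC [symO, symC, cd a] [symE] t)) ?_
    -- rotE
    refine Relation.ReflTransGen.trans
      (stepRT mem_rotE ([symO, symC, cd a] ++ t.map cd) [] _ _ (by simp) rfl) ?_
    exact rtCast (by simp) (by simp) (finish ([] : List α) (a :: t))

end Aux

open RotSym in
/-- `rot Σ_A` simulates rotation. -/
theorem rot_simulates_sim {α : Type*} [Finite α] (u v : List α) (h : Sim u v) :
    Relation.ReflTransGen (Step (rotSRS α))
      (symB :: u.map ca ++ [symE]) (symW :: v.map ca ++ [symE]) := by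
  obtain ⟨w₁, w₂, hu, hv⟩ := h
  subst hu hv
  match w₁, w₂ with
  | [], w₂ => simpa using rot_id w₂
  | w₁, [] => simpa using rot_id w₁
  | a :: s, b :: t =>
    -- rotB
    refine Relation.ReflTransGen.trans
      (stepRT (mem_rotB a) [] ((s ++ b :: t).map ca ++ [symE]) _ _ (by simp) rfl) ?_
    -- rotC loop
    refine Relation.ReflTransGen.trans
      (rtCast (by simp) rfl (loopC [symO, symC, cd a] ([ca b] ++ t.map ca ++ [symE]) s)) ?_
    -- rotD
    refine Relation.ReflTransGen.trans
      (stepRT (mem_rotD b) ([symO, symC, cd a] ++ s.map cd) (t.map ca ++ [symE])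
        _ _ (by simp) rfl) ?_
    -- scan loop
    refine Relation.ReflTransGen.trans
      (rtCast (by simp) rfl (loopScan t [] b (a :: s))) ?_
    -- finish
    exact rtCast (by simp) (by simp) (finish (b :: t) (a :: s))

end CycleRewriting
end

section
/- For every alphabet Σ_A, the string rewrite relation →_{rot(Σ_A)} is terminating. -/
namespace CycleRewriting

open RotSym in
/-- A linear interpretation of the symbols of `rot Σ_A`. -/
def fsym {α : Type*} : RotSym α → ℕ → ℕ
  | ca _ => fun z => 3 * z + 9
  | cb _ => fun z => 3 * z + 14
  | cc _ => fun z => 3 * z + 4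
  | cd _ => fun z => 3 * z + 10
  | ce _ => fun z => 3 * z + 10
  | symB => fun z => 3 * z + 14
  | symE => fun z => 3 * z + 10
  | symW => fun z => z + 8
  | symR => fun z => z + 1
  | symG => fun z => 3 * z
  | symO => fun z => z + 9
  | symC => fun z => z
  | symL => fun z => z + 13
  | symS => fun z => 3 * z
  | symF => fun z => 2 * z + 9
  | symf => fun z => z + 2

def wval {α : Type*} (w : List (RotSym α)) (z : ℕ) : ℕ :=
  w.foldr (fun x acc => fsym x acc) z

lemma fsym_mono {α : Type*} (x : RotSym α) {z z' : ℕ} (h : z < z') :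
    fsym x z < fsym x z' := by
  cases x <;> simp only [fsym] <;> omega

lemma wval_mono {α : Type*} (w : List (RotSym α)) {z z' : ℕ} (h : z < z') :
    wval w z < wval w z' := by
  induction w with
  | nil => exact h
  | cons x t ih => exact fsym_mono x ih

lemma wval_append {α : Type*} (u v : List (RotSym α)) (z : ℕ) :
    wval (u ++ v) z = wval u (wval v z) := by
  simp [wval, List.foldr_append]

lemma wval_rule {α : Type*} {l r : List (RotSym α)} (h : (l, r) ∈ rotSRS α)
    (z : ℕ) : wval r z < wval l z := by
  rcases h with h | ⟨a, h⟩ | ⟨a, h⟩ | ⟨a, h⟩ | h | ⟨c, d, h⟩ | ⟨c, h⟩ | ⟨b, h⟩ |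
    ⟨a, h⟩ | h | ⟨d, h⟩ | h | ⟨e, h⟩ | h <;>
    (injection h with h1 h2; subst h1; subst h2; simp only [wval, List.foldr, fsym]; omega)

lemma wval_step {α : Type*} {x y : List (RotSym α)} (h : Step (rotSRS α) x y) :
    wval y 0 < wval x 0 := by
  obtain ⟨u, v, l, r, hR, hx, hy⟩ := h
  subst hx; subst hy
  simp only [wval_append]
  exact wval_mono u (wval_rule hR (wval v 0))

/-- the SRS `rot Σ_A` is terminating. -/
theorem rot_terminating (α : Type*) [Finite α] :
    Terminating (Step (rotSRS α)) := by
  rintro ⟨f, hf⟩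
  have key : ∀ n : ℕ, wval (f n) 0 + n ≤ wval (f 0) 0 := by
    intro n
    induction n with
    | zero => omega
    | succ m ih => have := wval_step (hf m); omega
  have := key (wval (f 0) 0 + 1)
  omega

end CycleRewriting
end

section
/- Let S ⊆ R be SRSs over Σ and let ⟨·⟩ : Σ → M be a matrix interpretation (into a set M of d×d matrices over a commutative semiring X with well-founded order > and matrix relations >, ≥ satisfying the compatibility and trace conditions) such that ⟨ℓ⟩ > ⟨r⟩ for all rules (ℓ → r) ∈ S and ⟨ℓ⟩ ≥ ⟨r⟩ for all rules (ℓ → r) ∈ R ∖ S. Then the cycle rewrite relation ∘→_S is terminating relative to ∘→_R. -/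
namespace CycleRewriting

/-- The extension of a matrix interpretation to strings: `⟨ε⟩ = I` and
`⟨u a⟩ = ⟨u⟩ × ⟨a⟩`. -/
def interp {α X : Type*} [CommSemiring X] {d : ℕ}
    (iota : α → Matrix (Fin d) (Fin d) X) (w : List α) : Matrix (Fin d) (Fin d) X :=
  (w.map iota).prod

/-- trace-decreasing matrix interpretations prove relative cycle
termination. -/
theorem matrix_interpretation_relative_cycle_termination
    {α : Type*} [Finite α] {X : Type*} [CommSemiring X] {d : ℕ} (hd : 0 < d)
    (xlt : X → X → Prop) (hwf : WellFounded xlt)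
    (M : Set (Matrix (Fin d) (Fin d) X))
    (hone : (1 : Matrix (Fin d) (Fin d) X) ∈ M)
    (hmul : ∀ A ∈ M, ∀ B ∈ M, A * B ∈ M)
    (mgt mge : Matrix (Fin d) (Fin d) X → Matrix (Fin d) (Fin d) X → Prop)
    (hgt_mul : ∀ A ∈ M, ∀ B ∈ M, ∀ C ∈ M,
      mgt A B → mgt (A * C) (B * C) ∧ mgt (C * A) (C * B))
    (hge_mul : ∀ A ∈ M, ∀ B ∈ M, ∀ C ∈ M,
      mge A B → mge (A * C) (B * C) ∧ mge (C * A) (C * B))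
    (hgt_tr : ∀ A ∈ M, ∀ B ∈ M, mgt A B → xlt (Matrix.trace B) (Matrix.trace A))
    (hge_tr : ∀ A ∈ M, ∀ B ∈ M, mge A B →
      xlt (Matrix.trace B) (Matrix.trace A) ∨ Matrix.trace B = Matrix.trace A)
    (S R : Set (List α × List α)) (hSR : S ⊆ R) (hfin : R.Finite)
    (hne : ∀ p ∈ R, p.1 ≠ [])
    (iota : α → Matrix (Fin d) (Fin d) X) (hiota : ∀ a : α, iota a ∈ M)
    (hS : ∀ p ∈ S, mgt (interp iota p.1) (interp iota p.2))
    (hR : ∀ p ∈ R \ S, mge (interp iota p.1) (interp iota p.2)) :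
    RelTerminating (CycleStep S) (CycleStep R) := by
  rintro ⟨f, hstep, hinf⟩
  classical
  set g : ℕ → X := fun n => Matrix.trace (interp iota (f n)) with hgdef
  have hmem : ∀ w : List α, interp iota w ∈ M := by
    intro w
    induction w with
    | nil => simpa [interp] using hone
    | cons a t ih => simpa [interp] using hmul _ (hiota a) _ ih
  have happ : ∀ u v : List α, interp iota (u ++ v) = interp iota u * interp iota v := by
    intro u v; simp [interp]
  have htrsim : ∀ u v : List α, Sim u v →
      Matrix.trace (interp iota u) = Matrix.trace (interp iota v) := by
    rintro u v ⟨w₁, w₂, rfl, rfl⟩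
    rw [happ, happ, Matrix.trace_mul_comm]
  have hSdec : ∀ n, CycleStep S (f n) (f (n+1)) → xlt (g (n+1)) (g n) := by
    intro n hs
    obtain ⟨l, r, w, hrS, hsl, hsr⟩ := hs
    have h1 := (hgt_mul _ (hmem l) _ (hmem r) _ (hmem w) (hS _ hrS)).1
    have h2 := hgt_tr _ (hmul _ (hmem l) _ (hmem w)) _ (hmul _ (hmem r) _ (hmem w)) h1
    have e1 := htrsim _ _ hsl
    have e2 := htrsim _ _ hsr
    simp only [hgdef]
    rw [← e1, ← e2, happ, happ]
    exact h2
  have hRdec : ∀ n, xlt (g (n+1)) (g n) ∨ g (n+1) = g n := by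
    intro n
    obtain ⟨l, r, w, hrR, hsl, hsr⟩ := hstep n
    have e1 := htrsim _ _ hsl
    have e2 := htrsim _ _ hsr
    by_cases hS' : (l, r) ∈ S
    · exact Or.inl (hSdec n ⟨l, r, w, hS', hsl, hsr⟩)
    · have h1 := (hge_mul _ (hmem l) _ (hmem r) _ (hmem w) (hR _ ⟨hrR, hS'⟩)).1
      have h2 := hge_tr _ (hmul _ (hmem l) _ (hmem w)) _ (hmul _ (hmem r) _ (hmem w)) h1
      simp only [hgdef]
      rw [← e1, ← e2, happ, happ]
      exact h2
  have hA : ∀ m n, m ≤ n → Relation.TransGen xlt (g n) (g m) ∨ g n = g m := by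
    intro m n h
    induction n, h using Nat.le_induction with
    | base => exact Or.inr rfl
    | succ n hmn ih =>
      rcases hRdec n with h1 | h1
      · rcases ih with h2 | h2
        · exact Or.inl (h2.head h1)
        · exact Or.inl (h2 ▸ Relation.TransGen.single h1)
      · rw [h1]; exact ih
  have hex : ∀ a : ℕ, ∃ b, b ∈ {n : ℕ | CycleStep S (f n) (f (n + 1))} ∧ a < b := by
    intro a
    obtain ⟨b, hb, hab⟩ := hinf.exists_gt a
    exact ⟨b, hb, hab⟩
  let k : ℕ → ℕ := fun n => Nat.rec (hex 0).choose (fun _ prev => (hex prev).choose) n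
  have hk0 : k 0 ∈ {n : ℕ | CycleStep S (f n) (f (n + 1))} := (hex 0).choose_spec.1
  have hkS : ∀ n, k (n+1) ∈ {n : ℕ | CycleStep S (f n) (f (n + 1))} ∧ k n < k (n+1) :=
    fun n => (hex (k n)).choose_spec
  have hkmem : ∀ n, CycleStep S (f (k n)) (f (k n + 1)) := by
    intro n
    cases n with
    | zero => exact hk0
    | succ n => exact (hkS n).1
  have hchain : ∀ n, Relation.TransGen xlt (g (k (n+1) + 1)) (g (k n + 1)) := by
    intro n
    have hlt : k n + 1 ≤ k (n+1) := (hkS n).2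
    have hstrict : xlt (g (k (n+1) + 1)) (g (k (n+1))) := hSdec _ (hkmem (n+1))
    rcases hA (k n + 1) (k (n+1)) hlt with h2 | h2
    · exact h2.head hstrict
    · exact h2 ▸ Relation.TransGen.single hstrict
  obtain ⟨m, hm, hmin⟩ := (hwf.transGen).has_min (Set.range fun n => g (k n + 1))
    ⟨g (k 0 + 1), ⟨0, rfl⟩⟩
  obtain ⟨n, rfl⟩ := hm
  exact hmin _ ⟨n + 1, rfl⟩ (hchain n)

end CycleRewriting
end

section
/- Let S' ⊆ S, R' ⊆ R, S' ⊆ R', S ⊆ R be SRSs over Σ, and let ⟨·⟩ : Σ → M be a matrix interpretation (into a set M of d×d matrices over a commutative semiring X with well-founded order > and matrix relations >, ≥ satisfying the compatibility and trace conditions) such that: ∘→_{S'} is terminating relative to ∘→_{R'}; ⟨ℓ⟩ ≥ ⟨r⟩ for all rules (ℓ → r) ∈ (R' ∖ S) ∪ S'; and ⟨ℓ⟩ > ⟨r⟩ for all rules (ℓ → r) ∈ R ∖ ((R' ∖ S) ∪ S'). Then ∘→_S is terminating relative to ∘→_R. -/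
namespace CycleRewriting

section Aux

variable {α X : Type*} [CommSemiring X] {d : ℕ}

lemma interp_append (iota : α → Matrix (Fin d) (Fin d) X) (u v : List α) :
    interp iota (u ++ v) = interp iota u * interp iota v := by
  simp [interp]

lemma interp_mem {M : Set (Matrix (Fin d) (Fin d) X)}
    (hone : (1 : Matrix (Fin d) (Fin d) X) ∈ M)
    (hmul : ∀ A ∈ M, ∀ B ∈ M, A * B ∈ M)
    (iota : α → Matrix (Fin d) (Fin d) X) (hiota : ∀ a, iota a ∈ M) :
    ∀ w : List α, interp iota w ∈ M := by
  intro w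
  induction w with
  | nil => simpa [interp] using hone
  | cons a t ih =>
    have h : interp iota (a :: t) = iota a * interp iota t := by simp [interp]
    rw [h]; exact hmul _ (hiota a) _ ih

lemma trace_sim (iota : α → Matrix (Fin d) (Fin d) X) {u v : List α} (h : Sim u v) :
    Matrix.trace (interp iota u) = Matrix.trace (interp iota v) := by
  obtain ⟨w₁, w₂, hu, hv⟩ := h
  subst hu; subst hv
  rw [interp_append, interp_append, Matrix.trace_mul_comm]

end Aux

lemma descent {X : Type*} {xlt : X → X → Prop} (hwf : WellFounded xlt) (g : ℕ → X)
    (hweak : ∀ n, xlt (g (n + 1)) (g n) ∨ g (n + 1) = g n)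
    (hinf : {n : ℕ | xlt (g (n + 1)) (g n)}.Infinite) : False := by
  classical
  have key : ∀ n : ℕ, ∃ m, n ≤ m ∧ g m = g n ∧ xlt (g (m + 1)) (g m) := by
    intro n
    obtain ⟨m, hm, hnm⟩ := hinf.exists_gt n
    have hex : ∃ m, n ≤ m ∧ xlt (g (m + 1)) (g m) := ⟨m, hnm.le, hm⟩
    obtain ⟨hle, hlt⟩ := Nat.find_spec hex
    refine ⟨Nat.find hex, hle, ?_, hlt⟩
    have step : ∀ j, n + j ≤ Nat.find hex → g (n + j) = g n := by
      intro j
      induction j with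
      | zero => intro _; rfl
      | succ j ih =>
        intro hj
        have h1 : n + j < Nat.find hex := by omega
        have h2 : ¬ xlt (g (n + j + 1)) (g (n + j)) := by
          intro hc
          exact Nat.find_min hex h1 ⟨by omega, hc⟩
        have h3 := (hweak (n + j)).resolve_left h2
        rw [show n + (j + 1) = n + j + 1 by ring, h3, ih (by omega)]
    have h4 := step (Nat.find hex - n) (by omega)
    rwa [show n + (Nat.find hex - n) = Nat.find hex by omega] at h4
  have main : ∀ x, ¬ ∃ n, g n = x := by
    intro x
    refine hwf.induction (C := fun x => ¬ ∃ n, g n = x) x ?_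
    rintro y ih ⟨n, rfl⟩
    obtain ⟨m, _, hme, hlt⟩ := key n
    exact ih (g (m + 1)) (hme ▸ hlt) ⟨m + 1, rfl⟩
  exact main (g 0) ⟨0, rfl⟩

/-- the extension of trace-decreasing matrix interpretations for
relative cycle termination. -/
theorem matrix_interpretation_relative_cycle_termination_extension
    {α : Type*} [Finite α] {X : Type*} [CommSemiring X] {d : ℕ} (hd : 0 < d)
    (xlt : X → X → Prop) (hwf : WellFounded xlt)
    (M : Set (Matrix (Fin d) (Fin d) X))
    (hone : (1 : Matrix (Fin d) (Fin d) X) ∈ M)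
    (hmul : ∀ A ∈ M, ∀ B ∈ M, A * B ∈ M)
    (mgt mge : Matrix (Fin d) (Fin d) X → Matrix (Fin d) (Fin d) X → Prop)
    (hgt_mul : ∀ A ∈ M, ∀ B ∈ M, ∀ C ∈ M,
      mgt A B → mgt (A * C) (B * C) ∧ mgt (C * A) (C * B))
    (hge_mul : ∀ A ∈ M, ∀ B ∈ M, ∀ C ∈ M,
      mge A B → mge (A * C) (B * C) ∧ mge (C * A) (C * B))
    (hgt_tr : ∀ A ∈ M, ∀ B ∈ M, mgt A B → xlt (Matrix.trace B) (Matrix.trace A))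
    (hge_tr : ∀ A ∈ M, ∀ B ∈ M, mge A B →
      xlt (Matrix.trace B) (Matrix.trace A) ∨ Matrix.trace B = Matrix.trace A)
    (S' S R' R : Set (List α × List α))
    (hS'S : S' ⊆ S) (hR'R : R' ⊆ R) (hS'R' : S' ⊆ R') (hSR : S ⊆ R)
    (hfin : R.Finite) (hne : ∀ p ∈ R, p.1 ≠ [])
    (iota : α → Matrix (Fin d) (Fin d) X) (hiota : ∀ a : α, iota a ∈ M)
    (hrel : RelTerminating (CycleStep S') (CycleStep R'))
    (hge : ∀ p ∈ (R' \ S) ∪ S', mge (interp iota p.1) (interp iota p.2))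
    (hgt : ∀ p ∈ R \ ((R' \ S) ∪ S'), mgt (interp iota p.1) (interp iota p.2)) :
    RelTerminating (CycleStep S) (CycleStep R) := by
  classical
  rintro ⟨f, hRs, hSinf⟩
  set W : Set (List α × List α) := (R' \ S) ∪ S' with hWdef
  have hchoice : ∀ n : ℕ, ∃ q : List α × List α, q ∈ R ∧
      (CycleStep S (f n) (f (n + 1)) → q ∈ S) ∧
      ∃ w, Sim (q.1 ++ w) (f n) ∧ Sim (q.2 ++ w) (f (n + 1)) := by
    intro n
    by_cases hs : CycleStep S (f n) (f (n + 1))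
    · obtain ⟨l, r, w, hpS, h1, h2⟩ := hs
      exact ⟨(l, r), hSR hpS, fun _ => hpS, w, h1, h2⟩
    · obtain ⟨l, r, w, hpR, h1, h2⟩ := hRs n
      exact ⟨(l, r), hpR, fun h => absurd h hs, w, h1, h2⟩
  choose p hpR hpS wit hw1 hw2 using hchoice
  have hmem := interp_mem hone hmul iota hiota
  set g : ℕ → X := fun n => Matrix.trace (interp iota (f n)) with hg
  have gtr1 : ∀ n, g n = Matrix.trace (interp iota (p n).1 * interp iota (wit n)) := by
    intro n
    rw [hg]
    simp only
    rw [← trace_sim iota (hw1 n), interp_append]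
  have gtr2 : ∀ n, g (n + 1) =
      Matrix.trace (interp iota (p n).2 * interp iota (wit n)) := by
    intro n
    rw [hg]
    simp only
    rw [← trace_sim iota (hw2 n), interp_append]
  have hweak : ∀ n, xlt (g (n + 1)) (g n) ∨ g (n + 1) = g n := by
    intro n
    by_cases hPW : p n ∈ W
    · have h1 := hge (p n) hPW
      have h2 := (hge_mul _ (hmem (p n).1) _ (hmem (p n).2) _ (hmem (wit n)) h1).1
      have h3 := hge_tr _ (hmul _ (hmem (p n).1) _ (hmem (wit n)))
        _ (hmul _ (hmem (p n).2) _ (hmem (wit n))) h2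
      rw [gtr1 n, gtr2 n]
      exact h3
    · have h1 := hgt (p n) ⟨hpR n, hPW⟩
      have h2 := (hgt_mul _ (hmem (p n).1) _ (hmem (p n).2) _ (hmem (wit n)) h1).1
      have h3 := hgt_tr _ (hmul _ (hmem (p n).1) _ (hmem (wit n)))
        _ (hmul _ (hmem (p n).2) _ (hmem (wit n))) h2
      rw [gtr1 n, gtr2 n]
      exact Or.inl h3
  have hstrict : ∀ n, p n ∉ W → xlt (g (n + 1)) (g n) := by
    intro n hPW
    have h1 := hgt (p n) ⟨hpR n, hPW⟩
    have h2 := (hgt_mul _ (hmem (p n).1) _ (hmem (p n).2) _ (hmem (wit n)) h1).1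
    have h3 := hgt_tr _ (hmul _ (hmem (p n).1) _ (hmem (wit n)))
      _ (hmul _ (hmem (p n).2) _ (hmem (wit n))) h2
    rw [gtr1 n, gtr2 n]
    exact h3
  have hF : {n : ℕ | p n ∉ W}.Finite := by
    by_contra h
    have hinf : {n : ℕ | p n ∉ W}.Infinite := h
    exact descent hwf g hweak (hinf.mono fun n hn => hstrict n hn)
  obtain ⟨N, hN⟩ := hF.bddAbove
  have hWn : ∀ n, N < n → p n ∈ W := by
    intro n hn
    by_contra hc
    exact absurd (hN hc) (by omega)
  have hWR' : W ⊆ R' := by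
    rintro q (hq | hq)
    · exact hq.1
    · exact hS'R' hq
  refine hrel ⟨fun k => f (N + 1 + k), ?_, ?_⟩
  · intro k
    have hW : p (N + 1 + k) ∈ R' := hWR' (hWn _ (by omega))
    refine ⟨(p (N + 1 + k)).1, (p (N + 1 + k)).2, wit (N + 1 + k), by simpa using hW,
      hw1 (N + 1 + k), ?_⟩
    simpa [show N + 1 + (k + 1) = N + 1 + k + 1 by ring] using hw2 (N + 1 + k)
  · have hsub : (fun n => n - (N + 1)) '' ({n | CycleStep S (f n) (f (n + 1))} \ Set.Iic N)
        ⊆ {k : ℕ | CycleStep S' (f (N + 1 + k)) (f (N + 1 + (k + 1)))} := by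
      rintro k ⟨n, ⟨hnS, hnN⟩, rfl⟩
      have hnN' : N < n := by simpa using hnN
      have heq : N + 1 + (n - (N + 1)) = n := by omega
      have hpS' : p n ∈ S' := by
        have hSn : p n ∈ S := hpS n hnS
        rcases hWn n hnN' with h | h
        · exact absurd hSn h.2
        · exact h
      simp only [Set.mem_setOf_eq, heq]
      rw [show N + 1 + (n - (N + 1) + 1) = n + 1 by omega]
      exact ⟨(p n).1, (p n).2, wit n, by simpa using hpS', hw1 n, hw2 n⟩
    have h1 : ({n | CycleStep S (f n) (f (n + 1))} \ Set.Iic N).Infinite :=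
      hSinf.diff (Set.finite_Iic N)
    have h2 : ((fun n => n - (N + 1)) ''
        ({n | CycleStep S (f n) (f (n + 1))} \ Set.Iic N)).Infinite := by
      refine h1.image ?_
      rintro a ⟨_, ha⟩ b ⟨_, hb⟩ hab
      simp only [Set.mem_Iic, not_le] at ha hb
      have hab' : a - (N + 1) = b - (N + 1) := hab
      omega
    exact h2.mono hsub

end CycleRewriting
end
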